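/- arXiv:1811.04973 — 4 statements merged into one kernel-verified Lean document; each statement's English description precedes it below -/
import Mathlib

section
/- If h* is separable via h*(x) = g(x₀, K(x₁,...,x_ℓ)) with g strictly monotone (strictly increasing or strictly decreasing) in its second argument, then for every τ ∈ ℝ the classifier h_τ(x) := h*(0, x₁,...,x_ℓ) + τ = g(0, K(x₁,...,x_ℓ)) + τ is EL-fair with respect to h*. -/
section StrictMonoOrAnti

variable {α β γ : Type*} [LinearOrder β] [Preorder γ] {g : α → β → γ}

theorem apply_eq_apply_of_strictMono_or_strictAnti
    (hg : (∀ a, StrictMono (g a)) ∨ (∀ a, StrictAnti (g a))) {a b : α} {u v : β}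
    (h : g a u = g a v) : g b u = g b v := by
  obtain hg | hg := hg <;> rw [(hg a).injective h]

theorem apply_lt_apply_of_strictMono_or_strictAnti
    (hg : (∀ a, StrictMono (g a)) ∨ (∀ a, StrictAnti (g a))) {a b : α} {u v : β}
    (h : g a u < g a v) : g b u < g b v := by
  obtain hg | hg := hg
  · exact hg b ((hg a).lt_iff_lt.mp h)
  · exact hg b ((hg a).lt_iff_gt.mp h)

end StrictMonoOrAnti

/-- If `hs` is separable with `g` strictly monotone in its second argument, then
every shifted masked classifier `x ↦ hs (0, x₁,…,x_ℓ) + τ` is EL-fair w.r.t. `hs`. -/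
theorem masked_classifier_is_EL_fair {l : ℕ} (X : Set (ℝ × (Fin l → ℝ)))
    (hs : ℝ × (Fin l → ℝ) → ℝ) (g : ℝ → ℝ → ℝ) (K : (Fin l → ℝ) → ℝ)
    (hsep : ∀ x ∈ X, hs x = g x.1 (K x.2))
    (hmono : (∀ a, StrictMono (g a)) ∨ (∀ a, StrictAnti (g a)))
    (hclosed : ∀ x ∈ X, ((0 : ℝ), x.2) ∈ X)
    (τ : ℝ) (hτ : ℝ × (Fin l → ℝ) → ℝ)
    (hτdef : ∀ x, hτ x = hs (0, x.2) + τ) :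
    (∀ x1 ∈ X, ∀ x2 ∈ X, x1.2 = x2.2 → hτ x1 = hτ x2) ∧
    (∀ x1 ∈ X, ∀ x2 ∈ X, x1.1 = x2.1 →
      (hs x1 = hs x2 → hτ x1 = hτ x2) ∧ (hs x1 > hs x2 → hτ x1 ≥ hτ x2)) := by
  have hmask : ∀ x ∈ X, hτ x = g 0 (K x.2) + τ := fun x hx => by
    rw [hτdef, hsep _ (hclosed x hx)]
  refine ⟨fun x1 _ x2 _ h => by rw [hτdef, hτdef, h], fun x1 hx1 x2 hx2 hfst => ⟨?_, ?_⟩⟩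
  · intro heq
    rw [hsep x1 hx1, hsep x2 hx2, hfst] at heq
    rw [hmask x1 hx1, hmask x2 hx2, apply_eq_apply_of_strictMono_or_strictAnti hmono heq]
  · intro hgt
    rw [gt_iff_lt, hsep x1 hx1, hsep x2 hx2, hfst] at hgt
    rw [hmask x1 hx1, hmask x2 hx2, ge_iff_le, add_le_add_iff_right]
    exact (apply_lt_apply_of_strictMono_or_strictAnti hmono hgt).le
end

section
/- Suppose h_fair is a classifier satisfying explicit fairness (its value depends only on nonsensitive features) and implicit fairness with respect to h*, and h* is separable as g(x₀, K(x₁,...,x_ℓ)) with g strictly increasing in the second argument. Fix τ ∈ ℝ and define h_τ(x) = h*(0, x₁,...,x_ℓ) + τ. Then there exists a function λ_τ : ℝ → ℝ such that h_fair(x) = λ_τ(h_τ(x)) for all x ∈ X, and λ_τ is nondecreasing on the image of h_τ. -/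
/-- If `hfair` is explicitly and implicitly fair w.r.t. a separable `hs` (with `g`
strictly increasing in its second argument), then `hfair` factors through
`hτ x = hs (0, x₁,…,x_ℓ) + τ` via a function `λτ` nondecreasing on the image of `hτ`. -/
theorem fair_classifier_factors_through_masked {l : ℕ} (X : Set (ℝ × (Fin l → ℝ)))
    (hs hfair : ℝ × (Fin l → ℝ) → ℝ) (g : ℝ → ℝ → ℝ) (K : (Fin l → ℝ) → ℝ)
    (hsep : ∀ x ∈ X, hs x = g x.1 (K x.2))
    (hmono : ∀ a, StrictMono (g a))
    (hclosed : ∀ x ∈ X, ((0 : ℝ), x.2) ∈ X)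
    (hexp : ∀ x1 ∈ X, ∀ x2 ∈ X, x1.2 = x2.2 → hfair x1 = hfair x2)
    (himp : ∀ x1 ∈ X, ∀ x2 ∈ X, x1.1 = x2.1 →
      (hs x1 = hs x2 → hfair x1 = hfair x2) ∧ (hs x1 > hs x2 → hfair x1 ≥ hfair x2))
    (τ : ℝ) (hτ : ℝ × (Fin l → ℝ) → ℝ)
    (hτdef : ∀ x, hτ x = hs (0, x.2) + τ) :
    ∃ lam : ℝ → ℝ,
      (∀ x ∈ X, hfair x = lam (hτ x)) ∧
      (∀ x1 ∈ X, ∀ x2 ∈ X, hτ x1 > hτ x2 → lam (hτ x1) ≥ lam (hτ x2)) := by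
  classical
  -- hfair x = hfair (0, x.2)
  have hfair0 : ∀ x ∈ X, hfair x = hfair (0, x.2) := fun x hx =>
    hexp x hx (0, x.2) (hclosed x hx) rfl
  -- well-definedness
  have hwd : ∀ x1 ∈ X, ∀ x2 ∈ X, hτ x1 = hτ x2 → hfair x1 = hfair x2 := by
    intro x1 hx1 x2 hx2 heq
    have h1 : ((0:ℝ), x1.2) ∈ X := hclosed x1 hx1
    have h2 : ((0:ℝ), x2.2) ∈ X := hclosed x2 hx2
    have hseq : hs (0, x1.2) = hs (0, x2.2) := by
      have := heq; rw [hτdef, hτdef] at this; linarith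
    rw [hfair0 x1 hx1, hfair0 x2 hx2]
    exact (himp _ h1 _ h2 rfl).1 hseq
  -- the function
  refine ⟨fun z => if h : ∃ x, x ∈ X ∧ hτ x = z then hfair h.choose else 0, ?_, ?_⟩
  · intro x hx
    have hex : ∃ y, y ∈ X ∧ hτ y = hτ x := ⟨x, hx, rfl⟩
    simp only [dif_pos hex]
    exact hwd x hx _ hex.choose_spec.1 hex.choose_spec.2.symm
  · intro x1 hx1 x2 hx2 hgt
    have he1 : ∃ y, y ∈ X ∧ hτ y = hτ x1 := ⟨x1, hx1, rfl⟩
    have he2 : ∃ y, y ∈ X ∧ hτ y = hτ x2 := ⟨x2, hx2, rfl⟩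
    simp only [dif_pos he1, dif_pos he2]
    rw [← hwd x1 hx1 _ he1.choose_spec.1 he1.choose_spec.2.symm,
        ← hwd x2 hx2 _ he2.choose_spec.1 he2.choose_spec.2.symm]
    have h1 : ((0:ℝ), x1.2) ∈ X := hclosed x1 hx1
    have h2 : ((0:ℝ), x2.2) ∈ X := hclosed x2 hx2
    have hsgt : hs (0, x1.2) > hs (0, x2.2) := by
      have := hgt; rw [hτdef, hτdef] at this; linarith
    rw [hfair0 x1 hx1, hfair0 x2 hx2]
    exact (himp _ h1 _ h2 rfl).2 hsgt
end

section
/- If h_fair satisfies explicit fairness (depends only on nonsensitive features) and implicit fairness with respect to a separable h* = g(x₀, K(x₁,...,x_ℓ)) with g strictly increasing in the second coordinate, then h_fair factors through K: there exists a nondecreasing function μ : ℝ → ℝ (on the image of K) with h_fair(x) = μ(K(x₁,...,x_ℓ)) for all x ∈ X. -/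
/-- An explicitly and implicitly fair classifier (w.r.t. a separable `hs` with `g`
strictly increasing in the second argument) factors through `K` via a function
nondecreasing on the image of `K`. -/
theorem fair_factors_through_K {l : ℕ} (X : Set (ℝ × (Fin l → ℝ)))
    (hs hfair : ℝ × (Fin l → ℝ) → ℝ) (g : ℝ → ℝ → ℝ) (K : (Fin l → ℝ) → ℝ)
    (hsep : ∀ x ∈ X, hs x = g x.1 (K x.2))
    (hmono : ∀ a, StrictMono (g a))
    (hclosed : ∀ x ∈ X, ((0 : ℝ), x.2) ∈ X)
    (hexp : ∀ x1 ∈ X, ∀ x2 ∈ X, x1.2 = x2.2 → hfair x1 = hfair x2)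
    (himp : ∀ x1 ∈ X, ∀ x2 ∈ X, x1.1 = x2.1 →
      (hs x1 = hs x2 → hfair x1 = hfair x2) ∧ (hs x1 > hs x2 → hfair x1 ≥ hfair x2)) :
    ∃ μ : ℝ → ℝ,
      (∀ x ∈ X, hfair x = μ (K x.2)) ∧
      (∀ x1 ∈ X, ∀ x2 ∈ X, K x1.2 > K x2.2 → μ (K x1.2) ≥ μ (K x2.2)) := by
  -- key: hfair depends only on K x.2
  have key : ∀ x1 ∈ X, ∀ x2 ∈ X, K x1.2 = K x2.2 → hfair x1 = hfair x2 := by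
    intro x1 hx1 x2 hx2 hK
    have h01 := hclosed x1 hx1
    have h02 := hclosed x2 hx2
    have e1 : hfair x1 = hfair (0, x1.2) := hexp x1 hx1 _ h01 rfl
    have e2 : hfair x2 = hfair (0, x2.2) := hexp x2 hx2 _ h02 rfl
    have hse : hs (0, x1.2) = hs (0, x2.2) := by
      rw [hsep _ h01, hsep _ h02]; simp [hK]
    have := (himp _ h01 _ h02 rfl).1 hse
    rw [e1, e2, this]
  -- similarly monotone
  have keymono : ∀ x1 ∈ X, ∀ x2 ∈ X, K x1.2 > K x2.2 → hfair x1 ≥ hfair x2 := by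
    intro x1 hx1 x2 hx2 hK
    have h01 := hclosed x1 hx1
    have h02 := hclosed x2 hx2
    have e1 : hfair x1 = hfair (0, x1.2) := hexp x1 hx1 _ h01 rfl
    have e2 : hfair x2 = hfair (0, x2.2) := hexp x2 hx2 _ h02 rfl
    have hse : hs (0, x1.2) > hs (0, x2.2) := by
      rw [hsep _ h01, hsep _ h02]; exact hmono 0 hK
    have := (himp _ h01 _ h02 rfl).2 hse
    rw [e1, e2]; exact this
  classical
  refine ⟨fun t => if h : ∃ x ∈ X, K x.2 = t then hfair h.choose else 0, ?_, ?_⟩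
  · intro x hx
    have h : ∃ y ∈ X, K y.2 = K x.2 := ⟨x, hx, rfl⟩
    simp only [dif_pos h]
    obtain ⟨hy, hKy⟩ := h.choose_spec
    exact (key h.choose hy x hx hKy).symm
  · intro x1 hx1 x2 hx2 hK
    have h1 : ∃ y ∈ X, K y.2 = K x1.2 := ⟨x1, hx1, rfl⟩
    have h2 : ∃ y ∈ X, K y.2 = K x2.2 := ⟨x2, hx2, rfl⟩
    simp only [dif_pos h1, dif_pos h2]
    obtain ⟨hy1, hKy1⟩ := h1.choose_spec
    obtain ⟨hy2, hKy2⟩ := h2.choose_spec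
    exact keymono h1.choose hy1 h2.choose hy2 (by rw [hKy1, hKy2]; exact hK)
end

section
/- The generalization to multiple sensitive features holds: with sensitive block x₀ ∈ ℝ^m and h* separable as g(x₀, K(x₁,...,x_ℓ)) where g : ℝ^m × ℝ → ℝ is strictly increasing in its last argument, for every τ ∈ ℝ the classifier h_τ(x) = h*(0_m, x₁,...,x_ℓ) + τ is EL-fair with respect to h*. -/
/-- Generalization to multiple sensitive features: with sensitive block in `ℝ^m` and
`hs` separable with `g` strictly increasing in its last argument, every shifted
masked classifier is EL-fair. -/
theorem masked_classifier_EL_fair_multi {m l : ℕ}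
    (X : Set ((Fin m → ℝ) × (Fin l → ℝ)))
    (hs : (Fin m → ℝ) × (Fin l → ℝ) → ℝ)
    (g : (Fin m → ℝ) → ℝ → ℝ) (K : (Fin l → ℝ) → ℝ)
    (hsep : ∀ x ∈ X, hs x = g x.1 (K x.2))
    (hmono : ∀ a, StrictMono (g a))
    (hclosed : ∀ x ∈ X, ((0 : Fin m → ℝ), x.2) ∈ X)
    (τ : ℝ) (hτ : (Fin m → ℝ) × (Fin l → ℝ) → ℝ)
    (hτdef : ∀ x, hτ x = hs (0, x.2) + τ) :
    (∀ x1 ∈ X, ∀ x2 ∈ X, x1.2 = x2.2 → hτ x1 = hτ x2) ∧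
    (∀ x1 ∈ X, ∀ x2 ∈ X, x1.1 = x2.1 →
      (hs x1 = hs x2 → hτ x1 = hτ x2) ∧ (hs x1 > hs x2 → hτ x1 ≥ hτ x2)) := by
  have masked : ∀ x ∈ X, hτ x = g 0 (K x.2) + τ := fun x hx => by
    rw [hτdef, hsep _ (hclosed x hx)]
  refine ⟨fun x1 _ x2 _ h => by rw [hτdef, hτdef, h], fun x1 hx1 x2 hx2 hsame => ?_⟩
  -- With the sensitive block fixed, both `hs` and `hτ` are strictly increasing functions of `K`.
  have hs1 : hs x1 = g x1.1 (K x1.2) := hsep x1 hx1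
  have hs2 : hs x2 = g x1.1 (K x2.2) := by rw [hsep x2 hx2, hsame]
  rw [masked x1 hx1, masked x2 hx2, hs1, hs2, (hmono x1.1).injective.eq_iff, gt_iff_lt,
    (hmono x1.1).lt_iff_lt]
  exact ⟨fun hK => by rw [hK], fun hK => add_le_add_left ((hmono 0).monotone hK.le) τ⟩
end
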